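/- arXiv:2309.00337 — 6 statements merged into one kernel-verified Lean document; each statement's English description precedes it below -/
import Mathlib

section
/- Let F : J ⥤ Cat and let (i, a) and (i′, a′) be pairs (with a ∈ F(i), a′ ∈ F(i′)) that are connected by an identity-decorated zig-zag, i.e., a zig-zag in the category of elements of Ob ∘ F. Then the trivial zig-zag at i decorated by id_a and the trivial zig-zag at i′ decorated by id_{a′} are related under the equivalence relation ≈ on F-decorated zig-zags. -/
open CategoryTheory

universe u

namespace ZigZagColimit

variable {J : Type u} [Category.{u} J]

/-- An `F`-decorated zig-zag from `(i, a)` to `(j, b)`: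
either a decoration of the trivial zig-zag at `i` (a single morphism `a ⟶ b` in `F.obj i`),
or a roof `l : j₁ ⟶ i`, `r : j₁ ⟶ i₁` together with a middle object `a₁ : F.obj j₁`,
a decorating morphism `f : a ⟶ (F.map l).toFunctor.obj a₁` and a decorated zig-zag continuing from
`(i₁, (F.map r).toFunctor.obj a₁)`. -/
inductive DecZig (F : J ⥤ Cat.{u, u}) : ∀ (i : J), F.obj i → ∀ (j : J), F.obj j → Type u
  | triv {i : J} {a b : F.obj i} (f : a ⟶ b) : DecZig F i a i b
  | cons {i j₁ i₁ j : J} {a : F.obj i} {a₁ : F.obj j₁} {b : F.obj j}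
      (l : j₁ ⟶ i) (r : j₁ ⟶ i₁) (f : a ⟶ (F.map l).toFunctor.obj a₁)
      (rest : DecZig F i₁ ((F.map r).toFunctor.obj a₁) j b) : DecZig F i a j b

/-- Concatenation of decorated zig-zags: concatenate the underlying zig-zags, composing
the two adjacent decorating morphisms at the junction. -/
def DecZig.comp {F : J ⥤ Cat.{u, u}} :
    ∀ {i j k : J} {a : F.obj i} {b : F.obj j} {c : F.obj k},
      DecZig F i a j b → DecZig F j b k c → DecZig F i a k c
  | _, _, _, _, _, _, .triv f, .triv g => .triv (f ≫ g)
  | _, _, _, _, _, _, .triv f, .cons l r g rest => .cons l r (f ≫ g) rest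
  | _, _, _, _, _, _, .cons l r f rest, E => .cons l r f (rest.comp E)

/-- A decorated zig-zag is identity-decorated if all decorating morphisms are
(identities, i.e.) `eqToHom`s of the forced equalities of objects. -/
inductive DecZig.IsId (F : J ⥤ Cat.{u, u}) :
    ∀ {i : J} {a : F.obj i} {j : J} {b : F.obj j}, DecZig F i a j b → Prop
  | triv {i : J} {a b : F.obj i} (h : a = b) : DecZig.IsId F (.triv (eqToHom h))
  | cons {i j₁ i₁ j : J} {a : F.obj i} {a₁ : F.obj j₁} {b : F.obj j}
      (l : j₁ ⟶ i) (r : j₁ ⟶ i₁) (h : a = (F.map l).toFunctor.obj a₁)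
      {rest : DecZig F i₁ ((F.map r).toFunctor.obj a₁) j b} (hr : DecZig.IsId F rest) :
      DecZig.IsId F (.cons l r (eqToHom h) rest)

/-- 2-cells of the zig-zag double category `ℤF`, lying over vertical boundary morphisms
`ρi : i ⟶ i'` and `ρj : j ⟶ j'` in `J`.  They are generated by horizontal concatenation of
the two generating cell types: squares (collapsing a roof onto an object, composing the two
decorating morphisms) and roof morphisms (mapping a roof to a roof). -/
inductive Cell (F : J ⥤ Cat.{u, u}) :
    ∀ {i j i' j' : J} (ρi : i ⟶ i') (ρj : j ⟶ j') {a : F.obj i} {b : F.obj j},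
      DecZig F i a j b → DecZig F i' ((F.map ρi).toFunctor.obj a) j' ((F.map ρj).toFunctor.obj b) → Prop
  | triv {i k : J} (ρ : i ⟶ k) {a b : F.obj i} (f : a ⟶ b) :
      Cell F ρ ρ (.triv f) (.triv ((F.map ρ).toFunctor.map f))
  | squareCons {i i₁ k j₁ j j' : J} (l : j₁ ⟶ i) (r : j₁ ⟶ i₁) (ρi : i ⟶ k) (ρ₁ : i₁ ⟶ k)
      (w : l ≫ ρi = r ≫ ρ₁)
      {a : F.obj i} {a₁ : F.obj j₁} {b : F.obj j}
      (f₀ : a ⟶ (F.map l).toFunctor.obj a₁)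
      (h1 : (F.map ρi).toFunctor.obj ((F.map l).toFunctor.obj a₁) = (F.map ρ₁).toFunctor.obj ((F.map r).toFunctor.obj a₁))
      {ρj : j ⟶ j'}
      {rest : DecZig F i₁ ((F.map r).toFunctor.obj a₁) j b}
      {rest' : DecZig F k ((F.map ρ₁).toFunctor.obj ((F.map r).toFunctor.obj a₁)) j' ((F.map ρj).toFunctor.obj b)}
      (hc : Cell F ρ₁ ρj rest rest') :
      Cell F ρi ρj (.cons l r f₀ rest)
        (DecZig.comp (.triv ((F.map ρi).toFunctor.map f₀ ≫ eqToHom h1)) rest')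
  | roofCons {i i' i₁ i₁' j₁ j₁' j j' : J} (l : j₁ ⟶ i) (r : j₁ ⟶ i₁)
      (l' : j₁' ⟶ i') (r' : j₁' ⟶ i₁')
      (ρi : i ⟶ i') (ρ₁ : i₁ ⟶ i₁') (ρt : j₁ ⟶ j₁')
      (wl : l ≫ ρi = ρt ≫ l') (wr : r ≫ ρ₁ = ρt ≫ r')
      {a : F.obj i} {a₁ : F.obj j₁} {b : F.obj j}
      (f₀ : a ⟶ (F.map l).toFunctor.obj a₁)
      (h1 : (F.map ρi).toFunctor.obj ((F.map l).toFunctor.obj a₁) = (F.map l').toFunctor.obj ((F.map ρt).toFunctor.obj a₁))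
      (h2 : (F.map r').toFunctor.obj ((F.map ρt).toFunctor.obj a₁) = (F.map ρ₁).toFunctor.obj ((F.map r).toFunctor.obj a₁))
      {ρj : j ⟶ j'}
      {rest : DecZig F i₁ ((F.map r).toFunctor.obj a₁) j b}
      {rest' : DecZig F i₁' ((F.map ρ₁).toFunctor.obj ((F.map r).toFunctor.obj a₁)) j' ((F.map ρj).toFunctor.obj b)}
      (hc : Cell F ρ₁ ρj rest rest') :
      Cell F ρi ρj (.cons l r f₀ rest)
        (.cons l' r' ((F.map ρi).toFunctor.map f₀ ≫ eqToHom h1)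
          (DecZig.comp (.triv (eqToHom h2)) rest'))

/-- Bundled decorated zig-zags. -/
structure DecZ (F : J ⥤ Cat.{u, u}) : Type u where
  {i : J}
  {j : J}
  {a : F.obj i}
  {b : F.obj j}
  z : DecZig F i a j b

/-- The one-step relation on decorated zig-zags given by the 2-cells of `ℤF`. -/
def CellRel (F : J ⥤ Cat.{u, u}) (D D' : DecZ F) : Prop :=
  ∃ (ρi : D.i ⟶ D'.i) (ρj : D.j ⟶ D'.j)
    (z' : DecZig F D'.i ((F.map ρi).toFunctor.obj D.a) D'.j ((F.map ρj).toFunctor.obj D.b)),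
    Cell F ρi ρj D.z z' ∧ D' = DecZ.mk z'

/-- The equivalence relation `≈` on decorated zig-zags generated by the 2-cells of `ℤF`. -/
def Eqv (F : J ⥤ Cat.{u, u}) : DecZ F → DecZ F → Prop :=
  Relation.EqvGen (CellRel F)

/-- Pairs `(i, a)` with `a` an object of `F.obj i`. -/
structure ObjPair (F : J ⥤ Cat.{u, u}) : Type u where
  i : J
  a : F.obj i

/-- The basic relation on pairs: `(i, a) ∼ (j, (F.map u).toFunctor.obj a)` for `u : i ⟶ j`. -/
def ObjRel (F : J ⥤ Cat.{u, u}) (x y : ObjPair F) : Prop :=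
  ∃ u : x.i ⟶ y.i, (F.map u).toFunctor.obj x.a = y.a

/-!
Each roof `(l, r)` of an identity-decorated zig-zag joins `(i, l̃ a₁)` to `(i₁, r̃ a₁)` through
`(j₁, a₁)`. The trivial cell over a morphism `ρ` carries `𝟙 a` to `ρ̃ (𝟙 a) = 𝟙 (ρ̃ a)`, so
crossing both legs of every roof with such cells relates the identity decorations at the two ends.
-/

section

variable {F : J ⥤ Cat.{u, u}}

lemma cellRel_triv {i k : J} (ρ : i ⟶ k) {a b : F.obj i} (f : a ⟶ b) :
    CellRel F ⟨.triv f⟩ ⟨.triv ((F.map ρ).toFunctor.map f)⟩ :=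
  ⟨ρ, ρ, _, Cell.triv ρ f, rfl⟩

lemma eqv_triv_id_map {i k : J} (ρ : i ⟶ k) (a : F.obj i) :
    Eqv F ⟨.triv (𝟙 a)⟩ ⟨.triv (𝟙 ((F.map ρ).toFunctor.obj a))⟩ := by
  rw [← (F.map ρ).toFunctor.map_id a]
  exact Relation.EqvGen.rel _ _ (cellRel_triv ρ (𝟙 a))

end

/-- If `(i, a)` and `(i′, a′)` are connected by an identity-decorated
zig-zag, then the trivial zig-zag at `i` decorated by `𝟙 a` and the trivial zig-zag at `i′`
decorated by `𝟙 a′` are related under `≈`. -/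
theorem trivial_ids_eqv_of_idDecorated_zigzag
    {J : Type u} [Category.{u} J] (F : J ⥤ Cat.{u, u})
    {i i' : J} {a : F.obj i} {a' : F.obj i'}
    (E : DecZig F i a i' a') (hE : DecZig.IsId F E) :
    Eqv F ⟨DecZig.triv (𝟙 a)⟩ ⟨DecZig.triv (𝟙 a')⟩ := by
  induction hE with
  | triv h =>
    subst h
    exact Relation.EqvGen.refl _
  | @cons _ _ _ _ _ a₁ _ l r h _ _ ih =>
    subst h
    have across_l := (eqv_triv_id_map l a₁).symm
    have across_r := eqv_triv_id_map r a₁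
    exact (across_l.trans _ _ _ across_r).trans _ _ _ ih

end ZigZagColimit
end

section
/- Let F : J ⥤ Cat. Every identity-decorated zig-zag (i, a) ⇝ (i′, a′) (a zig-zag in the category of elements of Ob ∘ F, decorated by identity morphisms) is related, under the equivalence relation ≈ on F-decorated zig-zags, to the trivial zig-zag at i′ decorated by id_{a′}. -/
open CategoryTheory

universe u

namespace ZigZagColimit

variable {J : Type u} [Category.{u} J]

/-!
An identity-decorated first roof `(l, r)` of a zig-zag `Z` can be removed up to `≈`: the zig-zag
starting at `a₁` with the degenerate roof `(𝟙, r)` followed by `Z` maps onto `(l, r) · Z` by a roof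
morphism over `l`, and collapses onto `Z` by a square over `r`. Removing the roofs one at a time
leaves the trivial zig-zag. Since `F.map (𝟙 i)` is the identity only propositionally, the identity
cells involved are compared with their sources as bundled zig-zags.
-/

lemma map_id_map_heq {F : J ⥤ Cat.{u, u}} {i : J} {a b : F.obj i} (f : a ⟶ b) :
    (F.map (𝟙 i)).toFunctor.map f ≍ f := by
  rw [F.map_id]
  rfl

namespace DecZ

variable {F : J ⥤ Cat.{u, u}}

lemma mk_triv_congr {i : J} {a a' b b' : F.obj i} {f : a ⟶ b} {f' : a' ⟶ b'}
    (ha : a = a') (hb : b = b') (hf : f ≍ f') :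
    DecZ.mk (DecZig.triv (F := F) f) = DecZ.mk (DecZig.triv f') := by
  subst ha hb
  cases hf
  rfl

lemma mk_cons_congr {i j₁ i₁ : J} {a a' : F.obj i} {a₁ a₁' : F.obj j₁} {l : j₁ ⟶ i}
    {r : j₁ ⟶ i₁} {f : a ⟶ (F.map l).toFunctor.obj a₁} {f' : a' ⟶ (F.map l).toFunctor.obj a₁'}
    {j j' : J} {b : F.obj j} {b' : F.obj j'}
    {rest : DecZig F i₁ ((F.map r).toFunctor.obj a₁) j b}
    {rest' : DecZig F i₁ ((F.map r).toFunctor.obj a₁') j' b'}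
    (ha : a = a') (ha₁ : a₁ = a₁') (hf : f ≍ f') (hrest : DecZ.mk rest = DecZ.mk rest') :
    DecZ.mk (DecZig.cons l r f rest) = DecZ.mk (DecZig.cons l r f' rest') := by
  subst ha ha₁
  cases hf
  obtain ⟨-, rfl, -, hb, hrest⟩ := DecZ.mk.inj hrest
  cases hb
  cases hrest
  rfl

lemma mk_triv_eqToHom_comp {i j : J} {a a' : F.obj i} {b : F.obj j} (h : a' = a)
    (Z : DecZig F i a j b) : DecZ.mk ((DecZig.triv (eqToHom h)).comp Z) = DecZ.mk Z := by
  subst h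
  cases Z <;> simp [DecZig.comp]

end DecZ

open DecZig DecZ

variable {F : J ⥤ Cat.{u, u}}

lemma Cell.exists_id {i j : J} {a : F.obj i} {b : F.obj j} (Z : DecZig F i a j b) :
    ∃ Z', Cell F (𝟙 i) (𝟙 j) Z Z' ∧ DecZ.mk Z' = DecZ.mk Z := by
  induction Z with
  | triv f =>
    exact ⟨_, Cell.triv (𝟙 _) f, mk_triv_congr (by simp) (by simp) (map_id_map_heq f)⟩
  | cons l r f rest ih =>
    obtain ⟨rest', hcell, hrest'⟩ := ih
    refine ⟨_, Cell.roofCons l r l r (𝟙 _) (𝟙 _) (𝟙 _) (by simp) (by simp) f (by simp) (by simp)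
      hcell, mk_cons_congr (by simp) (by simp) ?_ ((mk_triv_eqToHom_comp _ _).trans hrest')⟩
    exact (comp_eqToHom_heq _ _).trans (map_id_map_heq f)

lemma Cell.eqv {i j i' j' : J} {ρi : i ⟶ i'} {ρj : j ⟶ j'} {a : F.obj i} {b : F.obj j}
    {Z : DecZig F i a j b} {Z' : DecZig F i' _ j' _} (c : Cell F ρi ρj Z Z') {D : DecZ F}
    (hD : DecZ.mk Z' = D) : Eqv F ⟨Z⟩ D := by
  subst hD
  exact .rel _ _ ⟨ρi, ρj, Z', c, rfl⟩

lemma eqv_cons_eqToHom {i j₁ i₁ j : J} {a₁ : F.obj j₁} {b : F.obj j} (l : j₁ ⟶ i)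
    (r : j₁ ⟶ i₁) {a : F.obj i} (h : a = (F.map l).toFunctor.obj a₁)
    (Z : DecZig F i₁ ((F.map r).toFunctor.obj a₁) j b) :
    Eqv F ⟨cons l r (eqToHom h) Z⟩ ⟨Z⟩ := by
  subst h
  obtain ⟨Z', hcell, hZ'⟩ := Cell.exists_id Z
  have h₀ : a₁ = (F.map (𝟙 j₁)).toFunctor.obj a₁ := by simp
  have h₂ : (F.map r).toFunctor.obj ((F.map (𝟙 j₁)).toFunctor.obj a₁) =
      (F.map (𝟙 i₁)).toFunctor.obj ((F.map r).toFunctor.obj a₁) := by simp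
  have roof := Cell.roofCons (𝟙 j₁) r l r l (𝟙 i₁) (𝟙 j₁) (by simp) (by simp) (eqToHom h₀) rfl h₂
    hcell
  have square := Cell.squareCons (𝟙 j₁) r r (𝟙 i₁) (by simp) (eqToHom h₀) h₂ hcell
  refine .trans _ _ _ (.symm _ _ (roof.eqv ?_)) (square.eqv ?_)
  · refine mk_cons_congr rfl h₀.symm ?_ ((mk_triv_eqToHom_comp _ _).trans hZ')
    simpa [eqToHom_map] using eqToHom_heq_id_dom _ _ _
  · rw [eqToHom_map, eqToHom_trans, mk_triv_eqToHom_comp, hZ']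

/-- Every identity-decorated zig-zag `(i, a) ⇝ (i′, a′)` is related under
`≈` to the trivial zig-zag at `i′` decorated by the identity of `a′`. -/
theorem idDecorated_zigzag_eqv_trivial_id
    {J : Type u} [Category.{u} J] (F : J ⥤ Cat.{u, u})
    {i i' : J} {a : F.obj i} {a' : F.obj i'}
    (E : DecZig F i a i' a') (hE : DecZig.IsId F E) :
    Eqv F ⟨E⟩ ⟨DecZig.triv (𝟙 a')⟩ := by
  induction hE with
  | triv h =>
    subst h
    exact .refl _
  | cons l r h _ ih => exact .trans _ _ _ (eqv_cons_eqToHom l r h _) ih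

end ZigZagColimit
end

section
/- Let F : J ⥤ Cat. For any F-decorated zig-zag D : (i, a) ⇝ (j, b) and any identity-decorated zig-zag E : (j, b) ⇝ (j′, b′), the concatenation E ∘ D : (i, a) ⇝ (j′, b′) is related to D under the equivalence relation ≈ on F-decorated zig-zags. Likewise, for any identity-decorated zig-zag E′ : (i′, a′) ⇝ (i, a), the concatenation D ∘ E′ is related to D. -/
open CategoryTheory

universe u

namespace ZigZagColimit

variable {J : Type u} [Category.{u} J]

/-!
Every decorated zig-zag `D` carries an identity 2-cell over `𝟙`, whose target is `D` up to the
transport along `F.map (𝟙 _) = 𝟭`, and 2-cells compose horizontally. To absorb an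
identity-decorated roof `l, r` into `D`, extend `D` to the apex of the roof (through `l` and an
identity right leg). From this apex zig-zag there are two 2-cells, both completed by the identity
cell of `D`: a square collapsing the added roof, with target `D`, and a roof morphism onto the
roof, with target `D` followed by the roof. So both are `≈` to the apex zig-zag. The same span
with the apex in front absorbs a roof on the left; an induction over the roofs of `E` finishes.
-/

section

variable {F : J ⥤ Cat.{u, u}}

lemma map_id_obj {i : J} (a : F.obj i) : (F.map (𝟙 i)).toFunctor.obj a = a :=
  Functor.congr_obj (congrArg Cat.Hom.toFunctor (F.map_id i)) a

lemma map_id_map {i : J} {a b : F.obj i} (f : a ⟶ b) :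
    (F.map (𝟙 i)).toFunctor.map f = eqToHom (map_id_obj a) ≫ f ≫ eqToHom (map_id_obj b).symm := by
  simpa using Functor.congr_hom (congrArg Cat.Hom.toFunctor (F.map_id i)) f

namespace DecZig

section Comp

variable {i j k m : J} {a : F.obj i} {b : F.obj j} {c : F.obj k} {d : F.obj m}

@[simp]
lemma triv_comp_triv {x y z : F.obj i} (f : x ⟶ y) (g : y ⟶ z) :
    (triv f).comp (triv g : DecZig F i y i z) = triv (f ≫ g) := rfl

@[simp]
lemma triv_comp_cons {j₁ i₁ : J} {a₁ : F.obj j₁} {a' : F.obj i} (l : j₁ ⟶ i) (r : j₁ ⟶ i₁)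
    (f : a' ⟶ a) (g : a ⟶ (F.map l).toFunctor.obj a₁)
    (rest : DecZig F i₁ ((F.map r).toFunctor.obj a₁) j b) :
    (triv f).comp (cons l r g rest) = cons l r (f ≫ g) rest := rfl

@[simp]
lemma cons_comp {j₁ i₁ : J} {a₁ : F.obj j₁} (l : j₁ ⟶ i) (r : j₁ ⟶ i₁)
    (f : a ⟶ (F.map l).toFunctor.obj a₁) (rest : DecZig F i₁ ((F.map r).toFunctor.obj a₁) j b)
    (E : DecZig F j b k c) :
    (cons l r f rest).comp E = cons l r f (rest.comp E) := rfl

@[simp]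
lemma id_comp (Z : DecZig F i a j b) : (triv (𝟙 a)).comp Z = Z := by
  cases Z <;> simp

@[simp]
lemma comp_id (Z : DecZig F i a j b) : Z.comp (triv (𝟙 b)) = Z := by
  induction Z <;> simp_all

lemma comp_assoc (X : DecZig F i a j b) (Y : DecZig F j b k c) (Z : DecZig F k c m d) :
    (X.comp Y).comp Z = X.comp (Y.comp Z) := by
  induction X with
  | triv f => cases Y <;> cases Z <;> simp
  | cons l r f rest ih => simp [ih]

@[simp]
lemma triv_comp_triv_comp {a' a'' : F.obj i} (f : a'' ⟶ a') (g : a' ⟶ a) (Z : DecZig F i a j b) :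
    (triv f).comp ((triv g).comp Z) = (triv (f ≫ g)).comp Z := by
  rw [← comp_assoc, triv_comp_triv]

lemma cons_eq_cons_of_eq {j₁ i₁ : J} {a₁ a₁' : F.obj j₁} (h : a₁ = a₁') (l : j₁ ⟶ i) (r : j₁ ⟶ i₁)
    (f : a ⟶ (F.map l).toFunctor.obj a₁) (rest : DecZig F i₁ ((F.map r).toFunctor.obj a₁) j b) :
    cons l r f rest = cons (a₁ := a₁') l r (f ≫ eqToHom (by rw [h]))
      ((triv (eqToHom (by rw [h]))).comp rest) := by
  subst h; simp

lemma mk_eqToHom_comp {a' : F.obj i} (h : a' = a) (Z : DecZig F i a j b) :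
    DecZ.mk ((triv (eqToHom h)).comp Z) = DecZ.mk Z := by
  subst h; simp

lemma mk_comp_eqToHom {b' : F.obj j} (h : b = b') (Z : DecZig F i a j b) :
    DecZ.mk (Z.comp (triv (eqToHom h))) = DecZ.mk Z := by
  subst h; simp

end Comp

end DecZig

namespace Cell

lemma triv_comp {i j i' j' : J} {ρi : i ⟶ i'} {ρj : j ⟶ j'} {a a' : F.obj i} {b : F.obj j}
    {Q : DecZig F i a j b}
    {Q' : DecZig F i' ((F.map ρi).toFunctor.obj a) j' ((F.map ρj).toFunctor.obj b)}
    (f : a' ⟶ a) (hQ : Cell F ρi ρj Q Q') :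
    Cell F ρi ρj ((DecZig.triv f).comp Q) ((DecZig.triv ((F.map ρi).toFunctor.map f)).comp Q') := by
  cases hQ with
  | triv _ g => simpa using Cell.triv (F := F) ρi (f ≫ g)
  | squareCons l r ρi ρ₁ w f₀ h1 hc =>
    simpa using Cell.squareCons l r ρi ρ₁ w (f ≫ f₀) h1 hc
  | roofCons l r l' r' ρi ρ₁ ρt wl wr f₀ h1 h2 hc =>
    simpa using Cell.roofCons l r l' r' ρi ρ₁ ρt wl wr (f ≫ f₀) h1 h2 hc

theorem comp {i k j i' k' j' : J} {ρi : i ⟶ i'} {ρk : k ⟶ k'} {ρj : j ⟶ j'}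
    {a : F.obj i} {c : F.obj k} {b : F.obj j} {P : DecZig F i a k c}
    {P' : DecZig F i' ((F.map ρi).toFunctor.obj a) k' ((F.map ρk).toFunctor.obj c)}
    {Q : DecZig F k c j b}
    {Q' : DecZig F k' ((F.map ρk).toFunctor.obj c) j' ((F.map ρj).toFunctor.obj b)}
    (hP : Cell F ρi ρk P P') (hQ : Cell F ρk ρj Q Q') :
    Cell F ρi ρj (P.comp Q) (P'.comp Q') := by
  induction hP with
  | triv _ f => exact hQ.triv_comp f
  | squareCons l r ρi ρ₁ w f₀ h1 hc ih =>
    simpa [DecZig.comp_assoc] using Cell.squareCons l r ρi ρ₁ w f₀ h1 (ih hQ)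
  | roofCons l r l' r' ρi ρ₁ ρt wl wr f₀ h1 h2 hc ih =>
    simpa [DecZig.comp_assoc] using Cell.roofCons l r l' r' ρi ρ₁ ρt wl wr f₀ h1 h2 (ih hQ)

theorem id {i j : J} {a : F.obj i} {b : F.obj j} (D : DecZig F i a j b) :
    Cell F (𝟙 i) (𝟙 j) D
      ((DecZig.triv (eqToHom (map_id_obj a))).comp
        (D.comp (DecZig.triv (eqToHom (map_id_obj b).symm)))) := by
  induction D with
  | triv f => simpa [map_id_map] using Cell.triv (𝟙 _) f
  | @cons i j₁ i₁ j a a₁ b l r f rest ih =>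
    have h1 : (F.map (𝟙 i)).toFunctor.obj ((F.map l).toFunctor.obj a₁) =
        (F.map l).toFunctor.obj ((F.map (𝟙 j₁)).toFunctor.obj a₁) := by rw [map_id_obj, map_id_obj]
    have h2 : (F.map r).toFunctor.obj ((F.map (𝟙 j₁)).toFunctor.obj a₁) =
        (F.map (𝟙 i₁)).toFunctor.obj ((F.map r).toFunctor.obj a₁) := by rw [map_id_obj, map_id_obj]
    convert Cell.roofCons l r l r (𝟙 i) (𝟙 i₁) (𝟙 j₁) (by simp) (by simp) f h1 h2 ih using 1
    rw [DecZig.cons_eq_cons_of_eq (map_id_obj a₁).symm]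
    simp [map_id_map, DecZig.comp_assoc]

theorem eqv_s5 {i j i' j' : J} {ρi : i ⟶ i'} {ρj : j ⟶ j'} {a : F.obj i} {b : F.obj j}
    {Z : DecZig F i a j b}
    {Z' : DecZig F i' ((F.map ρi).toFunctor.obj a) j' ((F.map ρj).toFunctor.obj b)}
    (h : Cell F ρi ρj Z Z') : Eqv F ⟨Z⟩ ⟨Z'⟩ :=
  .rel _ _ ⟨ρi, ρj, Z', h, rfl⟩

theorem eqv_of_span {i j i₁ j₁ i₂ j₂ : J} {ρ₁ : i ⟶ i₁} {σ₁ : j ⟶ j₁} {ρ₂ : i ⟶ i₂}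
    {σ₂ : j ⟶ j₂} {a : F.obj i} {b : F.obj j} {Z : DecZig F i a j b}
    {Z₁ : DecZig F i₁ ((F.map ρ₁).toFunctor.obj a) j₁ ((F.map σ₁).toFunctor.obj b)}
    {Z₂ : DecZig F i₂ ((F.map ρ₂).toFunctor.obj a) j₂ ((F.map σ₂).toFunctor.obj b)}
    (h₁ : Cell F ρ₁ σ₁ Z Z₁) (h₂ : Cell F ρ₂ σ₂ Z Z₂) : Eqv F ⟨Z₁⟩ ⟨Z₂⟩ :=
  .trans _ _ _ (.symm _ _ h₁.eqv_s5) h₂.eqv_s5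

end Cell

namespace DecZig

theorem eqv_comp_roof {i k j₁ i₁ : J} {a : F.obj i} (l : j₁ ⟶ k) (r : j₁ ⟶ i₁) (a₁ : F.obj j₁)
    (D : DecZig F i a k ((F.map l).toFunctor.obj a₁)) :
    Eqv F ⟨D.comp (cons l r (𝟙 _) (triv (𝟙 _)))⟩ ⟨D⟩ := by
  let toApex : DecZig F k ((F.map l).toFunctor.obj a₁) j₁ a₁ :=
    cons l (𝟙 j₁) (𝟙 _) (triv (eqToHom (map_id_obj a₁)))
  have h1 : (F.map (𝟙 k)).toFunctor.obj ((F.map l).toFunctor.obj a₁) =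
      (F.map l).toFunctor.obj ((F.map (𝟙 j₁)).toFunctor.obj a₁) := by rw [map_id_obj, map_id_obj]
  have square : Cell F (𝟙 k) l toApex (triv (eqToHom (map_id_obj _))) := by
    simpa [eqToHom_map] using
      Cell.squareCons l (𝟙 j₁) (𝟙 k) l (by simp) (𝟙 _) h1 (Cell.triv l (eqToHom (map_id_obj a₁)))
  have roof : Cell F (𝟙 k) r toApex
      ((triv (eqToHom (map_id_obj _))).comp (cons l r (𝟙 _) (triv (𝟙 _)))) := by
    convert Cell.roofCons l (𝟙 j₁) l r (𝟙 k) r (𝟙 j₁) (by simp) (by simp) (𝟙 _) h1 rfl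
      (Cell.triv r (eqToHom (map_id_obj a₁))) using 1
    rw [cons_eq_cons_of_eq (map_id_obj a₁).symm]
    simp [eqToHom_map]
  have := Cell.eqv_of_span ((Cell.id D).comp roof) ((Cell.id D).comp square)
  simp only [comp_assoc, triv_comp_triv_comp, triv_comp_triv, eqToHom_trans, eqToHom_refl,
    id_comp, comp_id] at this
  rwa [mk_eqToHom_comp, mk_eqToHom_comp] at this

theorem eqv_roof_comp {k j₁ i₁ m : J} {e : F.obj m} (l : j₁ ⟶ k) (r : j₁ ⟶ i₁) (a₁ : F.obj j₁)
    (W : DecZig F i₁ ((F.map r).toFunctor.obj a₁) m e) :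
    Eqv F ⟨cons l r (𝟙 _) W⟩ ⟨W⟩ := by
  let fromApex : DecZig F j₁ a₁ i₁ ((F.map r).toFunctor.obj a₁) :=
    cons (𝟙 j₁) r (eqToHom (map_id_obj a₁).symm) (triv (𝟙 _))
  have h1 : (F.map r).toFunctor.obj ((F.map (𝟙 j₁)).toFunctor.obj a₁) =
      (F.map (𝟙 i₁)).toFunctor.obj ((F.map r).toFunctor.obj a₁) := by rw [map_id_obj, map_id_obj]
  have square : Cell F r (𝟙 i₁) fromApex (triv (eqToHom (map_id_obj _).symm)) := by
    simpa [eqToHom_map] using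
      Cell.squareCons (𝟙 j₁) r r (𝟙 i₁) (by simp) (eqToHom (map_id_obj a₁).symm) h1
        (Cell.triv (𝟙 i₁) (𝟙 _))
  have roof : Cell F l (𝟙 i₁) fromApex
      ((cons l r (𝟙 _) (triv (𝟙 _))).comp (triv (eqToHom (map_id_obj _).symm))) := by
    convert Cell.roofCons (𝟙 j₁) r l r l (𝟙 i₁) (𝟙 j₁) (by simp) (by simp)
      (eqToHom (map_id_obj a₁).symm) rfl h1 (Cell.triv (𝟙 i₁) (𝟙 _)) using 1
    rw [cons_eq_cons_of_eq (map_id_obj a₁).symm]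
    simp [eqToHom_map]
  have := Cell.eqv_of_span (roof.comp (Cell.id W)) (square.comp (Cell.id W))
  simp only [triv_comp_triv_comp, triv_comp_triv, cons_comp, Category.id_comp, eqToHom_trans,
    eqToHom_refl, id_comp] at this
  rwa [← cons_comp, mk_comp_eqToHom, mk_comp_eqToHom] at this

theorem eqv_comp_of_isId {i j k : J} {a : F.obj i} {b : F.obj j} {c : F.obj k}
    {E : DecZig F j b k c} (hE : IsId F E) (D : DecZig F i a j b) : Eqv F ⟨D.comp E⟩ ⟨D⟩ := by
  induction hE with
  | triv h => subst h; rw [eqToHom_refl, comp_id]; exact .refl _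
  | @cons _ _ _ _ _ a₁ _ l r h rest _ ih =>
    subst h
    have split : D.comp (cons l r (𝟙 _) rest) =
        (D.comp (cons l r (𝟙 _) (triv (𝟙 _)))).comp rest := by simp [comp_assoc]
    rw [eqToHom_refl, split]
    exact .trans _ _ _ (ih _) (eqv_comp_roof l r a₁ D)

theorem eqv_isId_comp {i j k : J} {a : F.obj i} {b : F.obj j} {c : F.obj k}
    {E : DecZig F i a j b} (hE : IsId F E) (D : DecZig F j b k c) : Eqv F ⟨E.comp D⟩ ⟨D⟩ := by
  induction hE with
  | triv h => subst h; rw [eqToHom_refl, id_comp]; exact .refl _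
  | @cons _ _ _ _ _ a₁ _ l r h rest _ ih =>
    subst h
    rw [eqToHom_refl, cons_comp]
    exact .trans _ _ _ (eqv_roof_comp l r a₁ (rest.comp D)) (ih D)

end DecZig

end

/-- **Statement 6.** Concatenating a decorated zig-zag `D : (i, a) ⇝ (j, b)` with an
identity-decorated zig-zag `E : (j, b) ⇝ (j′, b′)` on the right, or with an
identity-decorated zig-zag `E′ : (i′, a′) ⇝ (i, a)` on the left, yields a decorated zig-zag
related to `D` under `≈`. -/
theorem comp_idDecorated_eqv
    {J : Type u} [Category.{u} J] (F : J ⥤ Cat.{u, u})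
    {i j j' i' : J} {a : F.obj i} {b : F.obj j} {b' : F.obj j'} {a' : F.obj i'}
    (D : DecZig F i a j b)
    (E : DecZig F j b j' b') (hE : DecZig.IsId F E)
    (E' : DecZig F i' a' i a) (hE' : DecZig.IsId F E') :
    Eqv F ⟨D.comp E⟩ ⟨D⟩ ∧ Eqv F ⟨E'.comp D⟩ ⟨D⟩ :=
  ⟨DecZig.eqv_comp_of_isId hE D, DecZig.eqv_isId_comp hE' D⟩

end ZigZagColimit
end

section
/- Let N be a necklace with beads B₀, …, B_k: its vertex set V_N is a finite linearly ordered set, each bead B_i is an interval in V_N, max B_i = min B_{i+1} for 0 ≤ i < k, V_N = B₀ ∪ … ∪ B_k, and the set of joins is J_N = {min B₀} ∪ {max B_i : 0 ≤ i ≤ k}. For every p ≥ 0, the assignment sending a flag U⁰ ⊆ U¹ ⊆ … ⊆ U^p of subsets of V_N with J_N ⊆ U⁰ to the tuple of flags ((U⁰ ∩ B_i) ⊆ … ⊆ (U^p ∩ B_i))_{i=0,…,k} is a bijection onto the set of (k+1)-tuples of flags (U_i⁰ ⊆ … ⊆ U_i^p) of subsets of B_i satisfying min B_i ∈ U_i⁰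 and max B_i ∈ U_i⁰ for each i; its inverse sends a tuple to the flag with U^r = U_0^r ∪ … ∪ U_k^r. -/
open CategoryTheory Opposite

namespace Necklaces

/-- Bead lengths, extended to `ℕ`. -/
def nn (k : ℕ) (n : Fin (k + 1) → ℕ) (j : ℕ) : ℕ :=
  if h : j < k + 1 then n ⟨j, h⟩ else 0

/-- Partial sums of bead lengths: `off k n i = n₀ + … + n_{i-1}`. -/
def off (k : ℕ) (n : Fin (k + 1) → ℕ) : ℕ → ℕ
  | 0 => 0
  | i + 1 => off k n i + nn k n i

/-- The last vertex index of the necklace `Δ^{n₀} ∨ … ∨ Δ^{n_k}`. -/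
def total (k : ℕ) (n : Fin (k + 1) → ℕ) : ℕ := off k n (k + 1)

theorem off_le_off (k : ℕ) (n : Fin (k + 1) → ℕ) {a b : ℕ} (h : a ≤ b) :
    off k n a ≤ off k n b := by
  induction b with
  | zero => interval_cases a; exact le_rfl
  | succ b ih =>
    rcases Nat.lt_or_ge a (b + 1) with h' | h'
    · exact le_trans (ih (Nat.lt_succ_iff.mp h')) (Nat.le_add_right _ _)
    · have : a = b + 1 := le_antisymm h h'
      subst this; exact le_rfl

theorem nn_eq (k : ℕ) (n : Fin (k + 1) → ℕ) (i : Fin (k + 1)) : nn k n i.1 = n i := by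
  simp [nn, i.2]

theorem bead_last_le (k : ℕ) (n : Fin (k + 1) → ℕ) (i : Fin (k + 1)) :
    off k n i.1 + n i ≤ total k n := by
  have h1 : off k n i.1 + n i = off k n (i.1 + 1) := by
    rw [off, nn_eq]
  rw [h1]
  exact off_le_off k n i.2

/-- `v` lies in the `i`-th bead. -/
def InBead (k : ℕ) (n : Fin (k + 1) → ℕ) (i : Fin (k + 1)) (v : ℕ) : Prop :=
  off k n i.1 ≤ v ∧ v ≤ off k n i.1 + n i

theorem bead_cover_aux (k : ℕ) (n : Fin (k + 1) → ℕ) :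
    ∀ (m : ℕ), m ≤ k → ∀ v : ℕ, v ≤ off k n (m + 1) → ∃ i : Fin (k + 1), InBead k n i v := by
  intro m
  induction m with
  | zero =>
    intro _ v hv
    have h0 : nn k n 0 = n ⟨0, Nat.succ_pos k⟩ := nn_eq k n ⟨0, Nat.succ_pos k⟩
    have h1 : off k n (0 + 1) = off k n 0 + nn k n 0 := rfl
    have h2 : off k n 0 = 0 := rfl
    exact ⟨⟨0, Nat.succ_pos k⟩, by simp only [InBead, Fin.val_mk]; omega, by simp only [Fin.val_mk]; omega⟩
  | succ m ih =>
    intro hm v hv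
    rcases Nat.lt_or_ge (off k n (m + 1)) v with h' | h'
    · have hlt : m + 1 < k + 1 := by omega
      have h0 : nn k n (m + 1) = n ⟨m + 1, hlt⟩ := nn_eq k n ⟨m + 1, hlt⟩
      have h1 : off k n (m + 1 + 1) = off k n (m + 1) + nn k n (m + 1) := rfl
      exact ⟨⟨m + 1, hlt⟩, by simp only [Fin.val_mk]; omega, by simp only [Fin.val_mk]; omega⟩
    · exact ih (by omega) v h'

theorem bead_cover (k : ℕ) (n : Fin (k + 1) → ℕ) (v : ℕ) (hv : v ≤ total k n) :
    ∃ i : Fin (k + 1), InBead k n i v :=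
  bead_cover_aux k n k le_rfl v hv

/-- The realization `|N| = Δ^{n₀} ∨ … ∨ Δ^{n_k}` of a necklace, modelled as the simplicial
subset of `Δ^{total}` consisting of those simplices whose vertices all lie in a single
bead. -/
def NeckSS (k : ℕ) (n : Fin (k + 1) → ℕ) : SSet.{0} where
  obj m := {σ : m.unop ⟶ SimplexCategory.mk (total k n) //
    ∃ i : Fin (k + 1), ∀ x, InBead k n i (σ.toOrderHom x).1}
  map {m m'} θ := TypeCat.ofHom fun σ => ⟨θ.unop ≫ σ.1, by
    obtain ⟨i, hi⟩ := σ.2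
    exact ⟨i, fun x => hi _⟩⟩
  map_id := by
    intro m
    ext σ
    rfl
  map_comp := by
    intro m m' m'' θ θ'
    ext σ
    rfl

/-- The vertex `v` of the necklace, as a `0`-simplex of its realization. -/
def vert (k : ℕ) (n : Fin (k + 1) → ℕ) (v : Fin (total k n + 1)) :
    (NeckSS k n).obj (op (SimplexCategory.mk 0)) :=
  ⟨SimplexCategory.const _ (SimplexCategory.mk (total k n)) v, by
    obtain ⟨i, hi⟩ := bead_cover k n v.1 (Nat.lt_succ_iff.mp v.2)
    exact ⟨i, fun x => by simpa using hi⟩⟩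

/-- The inclusion of the `i`-th bead `Δ^{n_i}` into `Δ^{total}`. -/
def beadHom (k : ℕ) (n : Fin (k + 1) → ℕ) (i : Fin (k + 1)) :
    SimplexCategory.mk (n i) ⟶ SimplexCategory.mk (total k n) :=
  SimplexCategory.mkHom
    ⟨fun x => ⟨off k n i.1 + x.1, by have := bead_last_le k n i; omega⟩,
     fun x y hxy => by simpa using by omega⟩

/-- The `i`-th bead, as an `n_i`-simplex of the realization of the necklace. -/
def beadSimp (k : ℕ) (n : Fin (k + 1) → ℕ) (i : Fin (k + 1)) :
    (NeckSS k n).obj (op (SimplexCategory.mk (n i))) :=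
  ⟨beadHom k n i, ⟨i, fun x => by
    constructor
    · exact Nat.le_add_right _ _
    · have : x.1 ≤ n i := Nat.lt_succ_iff.mp x.2
      show off k n i.1 + x.1 ≤ off k n i.1 + n i
      omega⟩⟩

/-- The vertex of the necklace at position `x` of the `i`-th bead. -/
def vtxIdx (k : ℕ) (n : Fin (k + 1) → ℕ) (i : Fin (k + 1)) (x : Fin (n i + 1)) :
    Fin (total k n + 1) :=
  ⟨off k n i.1 + x.1, by have := bead_last_le k n i; omega⟩

/-- The set of joins of the necklace: the initial vertex of the first bead together with
the final vertices of all beads. -/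
def JN (k : ℕ) (n : Fin (k + 1) → ℕ) : Set (Fin (total k n + 1)) :=
  {v | v.1 = 0 ∨ ∃ i : Fin (k + 1), v.1 = off k n i.1 + n i}


/-- The `i`-th bead of the necklace, as a set of vertices (a consecutive interval). -/
def BeadSet (k : ℕ) (n : Fin (k + 1) → ℕ) (i : Fin (k + 1)) :
    Set (Fin (total k n + 1)) :=
  {v | InBead k n i v.1}

/-- The first vertex of the `i`-th bead. -/
def minB (k : ℕ) (n : Fin (k + 1) → ℕ) (i : Fin (k + 1)) : Fin (total k n + 1) :=
  ⟨off k n i.1, by have := bead_last_le k n i; omega⟩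

/-- The last vertex of the `i`-th bead. -/
def maxB (k : ℕ) (n : Fin (k + 1) → ℕ) (i : Fin (k + 1)) : Fin (total k n + 1) :=
  vtxIdx k n i (Fin.last (n i))

end Necklaces

/-!
Two distinct beads meet only in endpoints of each, and the endpoints of every bead are joins,
hence lie in `U⁰ ⊆ Uʳ`. So a flag is the union of its restrictions to the beads (which cover
`V_N`), and conversely the union of a tuple of bead flags meets `B_i` exactly in the `i`-th
flag: a point of another bead's flag lying in `B_i` is an endpoint of `B_i`, already in `U_i⁰`.
-/

namespace Set

variable {α ι κ : Type*} [Preorder κ] [OrderBot κ]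

def flagRestrictEquiv (B E : ι → Set α) (hcover : ∀ a, ∃ i, a ∈ B i)
    (hE : ∀ i, E i ⊆ B i) (hmeet : Pairwise fun i j => B i ∩ B j ⊆ E i) :
    {U : κ → Set α // Monotone U ∧ ⋃ i, E i ⊆ U ⊥} ≃
      {T : ι → κ → Set α // ∀ i, Monotone (T i) ∧ (∀ r, T i r ⊆ B i) ∧ E i ⊆ T i ⊥} where
  toFun U := ⟨fun i r => U.1 r ∩ B i, fun i =>
    ⟨fun _ _ hrs => inter_subset_inter_left _ (U.2.1 hrs), fun _ => inter_subset_right,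
      subset_inter ((subset_iUnion E i).trans U.2.2) (hE i)⟩⟩
  invFun T := ⟨fun r => ⋃ i, T.1 i r,
    fun _ _ hrs => iUnion_mono fun i => (T.2 i).1 hrs, iUnion_mono fun i => (T.2 i).2.2⟩
  left_inv U := by
    ext r a
    simp only [← inter_iUnion, mem_inter_iff, mem_iUnion, and_iff_left_iff_imp]
    exact fun _ => hcover a
  right_inv T := by
    ext i r a
    simp only [mem_inter_iff, mem_iUnion]
    refine ⟨fun ⟨⟨j, haj⟩, hai⟩ => ?_, fun ha => ⟨⟨i, ha⟩, (T.2 i).2.1 r ha⟩⟩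
    obtain rfl | hij := eq_or_ne i j
    · exact haj
    · have haE : a ∈ E i := hmeet hij ⟨hai, (T.2 j).2.1 r haj⟩
      exact (T.2 i).1 bot_le ((T.2 i).2.2 haE)

end Set

namespace Necklaces

section

variable (k : ℕ) (n : Fin (k + 1) → ℕ)

theorem off_succ (i : Fin (k + 1)) : off k n (i.1 + 1) = off k n i.1 + n i := by
  rw [off, nn_eq]

theorem maxB_castSucc_eq_minB_succ (i : Fin k) : maxB k n i.castSucc = minB k n i.succ :=
  Fin.ext (off_succ k n i.castSucc).symm

theorem exists_mem_beadSet (v : Fin (total k n + 1)) : ∃ i, v ∈ BeadSet k n i :=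
  bead_cover k n v.1 (Nat.lt_succ_iff.mp v.2)

theorem pair_subset_beadSet (i : Fin (k + 1)) :
    {minB k n i, maxB k n i} ⊆ BeadSet k n i :=
  Set.pair_subset_iff.mpr ⟨⟨le_rfl, Nat.le_add_right _ _⟩, ⟨Nat.le_add_right _ _, le_rfl⟩⟩

theorem beadSet_inter_subset_pair {i j : Fin (k + 1)} (hij : i ≠ j) :
    BeadSet k n i ∩ BeadSet k n j ⊆ {minB k n i, maxB k n i} := by
  rintro v ⟨⟨hi₁, hi₂⟩, ⟨hj₁, hj₂⟩⟩
  rcases hij.lt_or_gt with hlt | hgt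
  · have hoff := off_le_off k n (Nat.succ_le_of_lt hlt)
    rw [off_succ] at hoff
    exact Or.inr (Fin.ext (by simp only [maxB, vtxIdx, Fin.val_last]; omega))
  · have hoff := off_le_off k n (Nat.succ_le_of_lt hgt)
    rw [off_succ] at hoff
    exact Or.inl (Fin.ext (by simp only [minB]; omega))

theorem JN_eq_iUnion_pair : JN k n = ⋃ i, {minB k n i, maxB k n i} := by
  ext v
  simp only [JN, Set.mem_ofPred_eq, Set.mem_iUnion, Set.mem_insert_iff, Set.mem_singleton_iff]
  constructor
  · rintro (hv | ⟨i, hv⟩)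
    · exact ⟨0, Or.inl (Fin.ext hv)⟩
    · exact ⟨i, Or.inr (Fin.ext hv)⟩
  · rintro ⟨i, rfl | rfl⟩
    · cases i using Fin.cases with
      | zero => exact Or.inl rfl
      | succ i =>
        exact Or.inr ⟨i.castSucc, congrArg Fin.val (maxB_castSucc_eq_minB_succ k n i).symm⟩
    · exact Or.inr ⟨i, rfl⟩

end

/-- **Statement 10.** For a necklace with beads `B₀, …, B_k`: consecutive beads share
exactly their endpoint (`max B_i = min B_{i+1}`), the beads cover the vertex set, and for
every `p ≥ 0`, intersecting with the beads is a bijection from flags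
`U⁰ ⊆ … ⊆ U^p` of subsets of `V_N` with `J_N ⊆ U⁰` onto `(k+1)`-tuples of flags of subsets
of the beads containing the endpoints of their bead, with inverse given by taking unions. -/
theorem flag_restriction_bijection (p k : ℕ) (n : Fin (k + 1) → ℕ) :
    (∀ i : Fin k, maxB k n i.castSucc = minB k n i.succ) ∧
    (∀ v : Fin (total k n + 1), ∃ i : Fin (k + 1), v ∈ BeadSet k n i) ∧
    ∃ e : {U : Fin (p + 1) → Set (Fin (total k n + 1)) // Monotone U ∧ JN k n ⊆ U 0} ≃
        {T : ∀ _ : Fin (k + 1), Fin (p + 1) → Set (Fin (total k n + 1)) //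
          ∀ i, Monotone (T i) ∧ (∀ r, T i r ⊆ BeadSet k n i) ∧
            minB k n i ∈ T i 0 ∧ maxB k n i ∈ T i 0},
      (∀ U, (e U).1 = fun i r => U.1 r ∩ BeadSet k n i) ∧
      (∀ T, (e.symm T).1 = fun r => ⋃ i : Fin (k + 1), T.1 i r) := by
  refine ⟨maxB_castSucc_eq_minB_succ k n, exists_mem_beadSet k n, ?_⟩
  let e := Set.flagRestrictEquiv (κ := Fin (p + 1)) (BeadSet k n)
    (fun i => {minB k n i, maxB k n i}) (exists_mem_beadSet k n) (pair_subset_beadSet k n)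
    fun _ _ => beadSet_inter_subset_pair k n
  refine ⟨(Equiv.subtypeEquivRight fun U => by rw [JN_eq_iUnion_pair]; rfl).trans <|
    e.trans (Equiv.subtypeEquivRight fun T => by simp only [Set.pair_subset_iff]; rfl),
    fun _ => rfl, fun _ => rfl⟩

end Necklaces
end

section
/- Let J be a small category and F : J ⥤ Type. Two elements (i, a) and (j, b) of the disjoint union Σ_{i ∈ J} F(i) have equal images under the canonical maps into the colimit of F if and only if there exists an F-decorated zig-zag connecting them: a zig-zag in J from i to j with left legs l_k : j_k → i_{k−1} and right legs r_k : j_k → i_k (i₀ = i, i_n = j) together with elements a_k ∈ F(j_k) such that F(l₁)(a₁) = a, F(r_k)(a_k) = F(l_{k+1})(a_{k+1}) for 1 ≤ k < n, and F(r_n)(a_n) = b (for n = 0 the condition is i = j and a = b, or more generally equality of the pairs). -/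
/-! The colimit of `F` in types is the quotient of `Σ i, F(i)` by the equivalence relation
generated by `(i, a) ∼ (j, F(f) a)`. Decorated zig-zags form an equivalence relation containing
these generators and identified by every cocone, so they are exactly that relation. -/

open CategoryTheory Limits

universe u

namespace ZigZagType

variable {J : Type u} [Category.{u} J]

/-- `Conn F ⟨i, a⟩ ⟨j, b⟩` holds precisely when there is an `F`-decorated zig-zag connecting
`(i, a)` and `(j, b)`: a zig-zag in `J` from `i` to `j` with left legs `l_k : j_k ⟶ i_{k-1}`
and right legs `r_k : j_k ⟶ i_k`, together with elements `a_k ∈ F(j_k)` with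
`F(l₁)(a₁) = a`, `F(r_k)(a_k) = F(l_{k+1})(a_{k+1})` and `F(r_n)(a_n) = b`; for `n = 0` the
condition is equality of the pairs. -/
inductive Conn (F : J ⥤ Type u) : (Σ i : J, F.obj i) → (Σ i : J, F.obj i) → Prop
  | nil (x : Σ i : J, F.obj i) : Conn F x x
  | cons {i j₁ i₁ : J} (l : j₁ ⟶ i) (r : j₁ ⟶ i₁) (a₁ : F.obj j₁)
      {y : Σ i : J, F.obj i} (h : Conn F ⟨i₁, F.map r a₁⟩ y) : Conn F ⟨i, F.map l a₁⟩ y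

namespace Conn

variable {F : J ⥤ Type u}

theorem single {i j₁ i₁ : J} (l : j₁ ⟶ i) (r : j₁ ⟶ i₁) (a₁ : F.obj j₁) :
    Conn F ⟨i, F.map l a₁⟩ ⟨i₁, F.map r a₁⟩ :=
  cons l r a₁ (nil _)

theorem trans {x y z : Σ i : J, F.obj i} (hxy : Conn F x y) (hyz : Conn F y z) :
    Conn F x z := by
  induction hxy with
  | nil => exact hyz
  | cons l r a₁ _ ih => exact cons l r a₁ (ih hyz)

theorem symm {x y : Σ i : J, F.obj i} (h : Conn F x y) : Conn F y x := by
  induction h with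
  | nil => exact nil _
  | cons l r a₁ _ ih => exact ih.trans (single r l a₁)

theorem equivalence : Equivalence (Conn F) :=
  ⟨nil, symm, trans⟩

theorem of_colimitTypeRel {x y : Σ i : J, F.obj i} (h : F.ColimitTypeRel x y) : Conn F x y := by
  obtain ⟨i, a⟩ := x
  obtain ⟨j, b⟩ := y
  obtain ⟨f, hb⟩ := h
  dsimp only at f hb
  rw [hb]
  simpa using single (F := F) (𝟙 i) f a

theorem of_eqvGen_colimitTypeRel {x y : Σ i : J, F.obj i}
    (h : Relation.EqvGen F.ColimitTypeRel x y) : Conn F x y :=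
  equivalence.eqvGen_iff.mp (h.mono fun _ _ ↦ of_colimitTypeRel)

theorem cocone_ι_app_eq (c : Cocone F) {x y : Σ i : J, F.obj i} (h : Conn F x y) :
    c.ι.app x.1 x.2 = c.ι.app y.1 y.2 := by
  induction h with
  | nil => rfl
  | cons l r a₁ _ ih => exact (c.w_apply l a₁).trans ((c.w_apply r a₁).symm.trans ih)

end Conn

/-- **Statement 16.** Two elements `(i, a)` and `(j, b)` of `Σ_{i ∈ J} F(i)` have equal
images under the canonical maps into the colimit of `F : J ⥤ Type` if and only if there is
an `F`-decorated zig-zag connecting them. -/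
theorem colimit_ι_eq_iff_decorated_zigzag
    {J : Type u} [SmallCategory J] (F : J ⥤ Type u)
    {i j : J} (a : F.obj i) (b : F.obj j) :
    colimit.ι F i a = colimit.ι F j b ↔ Conn F ⟨i, a⟩ ⟨j, b⟩ :=
  ⟨fun h ↦ Conn.of_eqvGen_colimitTypeRel (Types.colimit_eq h),
    Conn.cocone_ι_app_eq (colimit.cocone F)⟩

end ZigZagType
end

section
/- Let J be a small category. For every zig-zag z : i ⇝ j in J, there exists a transposition 2-cell in the double category of iterated zig-zags of J: a finite vertical chain of 2-cells of the zig-zag double category ℤJ whose total horizontal source is z, whose total horizontal target is a constant (identity-decorated) zig-zag at j, whose left vertical boundary is the zig-zag z itself (viewed vertically), and whose right vertical boundary is a constant zig-zag at j. Dually, there exists such a chain with horizontal source a constant zig-zag at i, horizontal target z, left vertical boundary constant at i, and right vertical boundary z. -/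
open CategoryTheory

universe u

namespace ZigZagTranspose

variable {J : Type u} [Category.{u} J]

/-- A zig-zag in `J` from `i` to `j`: a finite string of roofs `i ⟵ j₁ ⟶ i₁ ⟵ … ⟶ j`. -/
inductive Zig (J : Type u) [Category.{u} J] : J → J → Type u
  | nil (i : J) : Zig J i i
  | cons {i j₁ i₁ j : J} (l : j₁ ⟶ i) (r : j₁ ⟶ i₁) (rest : Zig J i₁ j) : Zig J i j

/-- A constant (identity) zig-zag: all legs are identities. -/
inductive Zig.IsConst : ∀ {i j : J}, Zig J i j → Prop
  | nil (i : J) : Zig.IsConst (.nil i)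
  | cons {i j : J} {rest : Zig J i j} (h : Zig.IsConst rest) :
      Zig.IsConst (.cons (𝟙 i) (𝟙 i) rest)

/-- 2-cells of the zig-zag double category `ℤJ`, lying over vertical boundary morphisms
`ρi` and `ρj`; generated by horizontal concatenations of squares (collapsing a roof) and
roof morphisms, i.e. by endpoint-preserving functors of walking zig-zags (monotone
surjections) together with natural transformations. -/
inductive ZCell : ∀ {i j i' j' : J}, (i ⟶ i') → (j ⟶ j') → Zig J i j → Zig J i' j' → Prop
  | nil {i k : J} (ρ : i ⟶ k) : ZCell ρ ρ (.nil i) (.nil k)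
  | squareCons {i i₁ k j₁ j j' : J} (l : j₁ ⟶ i) (r : j₁ ⟶ i₁) (ρi : i ⟶ k) (ρ₁ : i₁ ⟶ k)
      (w : l ≫ ρi = r ≫ ρ₁) {ρj : j ⟶ j'} {rest : Zig J i₁ j} {rest' : Zig J k j'}
      (hc : ZCell ρ₁ ρj rest rest') : ZCell ρi ρj (.cons l r rest) rest'
  | roofCons {i i' i₁ i₁' j₁ j₁' j j' : J} (l : j₁ ⟶ i) (r : j₁ ⟶ i₁)
      (l' : j₁' ⟶ i') (r' : j₁' ⟶ i₁')
      (ρi : i ⟶ i') (ρ₁ : i₁ ⟶ i₁') (ρt : j₁ ⟶ j₁')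
      (wl : l ≫ ρi = ρt ≫ l') (wr : r ≫ ρ₁ = ρt ≫ r')
      {ρj : j ⟶ j'} {rest : Zig J i₁ j} {rest' : Zig J i₁' j'}
      (hc : ZCell ρ₁ ρj rest rest') :
      ZCell ρi ρj (.cons l r rest) (.cons l' r' rest')

/-- A finite vertical chain of 2-cells of `ℤJ` (a 2-cell of the double category `Z̃J` of
iterated zig-zags), recording its two vertical boundary zig-zags. Each step consists of a
middle horizontal zig-zag together with a cell pointing up and a cell pointing down, the
vertical legs assembling into the boundary zig-zags. -/
inductive CellChain :
    ∀ {i i' j j' : J}, Zig J i i' → Zig J j j' → Zig J i j → Zig J i' j' → Prop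
  | nil {i j : J} (z : Zig J i j) : CellChain (.nil i) (.nil j) z z
  | cons {m i i₁ mj j j₁ i' j' : J}
      (l : m ⟶ i) (r : m ⟶ i₁) (lj : mj ⟶ j) (rj : mj ⟶ j₁)
      {zl : Zig J i₁ i'} {zr : Zig J j₁ j'} {ztop : Zig J i j} {zmid : Zig J m mj}
      {znext : Zig J i₁ j₁} {zbot : Zig J i' j'}
      (cup : ZCell l lj zmid ztop) (cdn : ZCell r rj zmid znext)
      (rest : CellChain zl zr znext zbot) :
      CellChain (.cons l r zl) (.cons lj rj zr) ztop zbot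

/-!
Both chains are built one roof `i ⟵ j₁ ⟶ i₁` of `z` at a time. For the first, the middle
zig-zag is the current one with the left leg of its front roof replaced by `𝟙 j₁`; it maps up
onto the current zig-zag (a roof morphism over `l`) and down onto its tail (collapsing the
roof as a square over `r`), so the left boundary traces `z` while the right one stays at `j`.
For the second, `z` is grown from the empty zig-zag at `i`: the prefix built so far is carried
along by identity cells while the next roof is attached, so the right boundary traces `z`
while the left one stays at `i`.
-/

def Zig.append : ∀ {i a j : J}, Zig J i a → Zig J a j → Zig J i j
  | _, _, _, .nil _, s => s
  | _, _, _, .cons l r rest, s => .cons l r (rest.append s)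

theorem Zig.append_nil : ∀ {i a : J} (p : Zig J i a), p.append (.nil a) = p
  | _, _, .nil _ => rfl
  | _, _, .cons l r rest => congrArg (Zig.cons l r) rest.append_nil

theorem Zig.append_assoc : ∀ {i a b j : J} (p : Zig J i a) (q : Zig J a b) (s : Zig J b j),
    (p.append q).append s = p.append (q.append s)
  | _, _, _, _, .nil _, _, _ => rfl
  | _, _, _, _, .cons l r rest, q, s => congrArg (Zig.cons l r) (rest.append_assoc q s)

theorem ZCell.id : ∀ {i j : J} (z : Zig J i j), ZCell (𝟙 i) (𝟙 j) z z
  | _, _, .nil i => .nil (𝟙 i)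
  | _, _, .cons l r rest =>
      .roofCons l r l r (𝟙 _) (𝟙 _) (𝟙 _) (by simp) (by simp) (ZCell.id rest)

theorem ZCell.whiskerLeft : ∀ {i a : J} (p : Zig J i a) {c c' : J} {ρ : c ⟶ c'}
    {s : Zig J a c} {t : Zig J a c'},
    ZCell (𝟙 a) ρ s t → ZCell (𝟙 i) ρ (p.append s) (p.append t)
  | _, _, .nil _, _, _, _, _, _, h => h
  | _, _, .cons l r rest, _, _, _, _, _, h =>
      .roofCons l r l r (𝟙 _) (𝟙 _) (𝟙 _) (by simp) (by simp) (ZCell.whiskerLeft rest h)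

theorem exists_cellChain_self_const {i j : J} (z : Zig J i j) :
    ∃ (zbot : Zig J j j) (zr : Zig J j j),
      zbot.IsConst ∧ zr.IsConst ∧ CellChain z zr z zbot := by
  induction z with
  | nil i => exact ⟨.nil i, .nil i, .nil i, .nil i, .nil (.nil i)⟩
  | @cons i j₁ i₁ j l r rest ih =>
    obtain ⟨zbot, zr, hbot, hr, chain⟩ := ih
    have cup : ZCell l (𝟙 j) (.cons (𝟙 j₁) r rest) (.cons l r rest) :=
      .roofCons (𝟙 j₁) r l r l (𝟙 i₁) (𝟙 j₁) (by simp) (by simp) (ZCell.id rest)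
    have cdn : ZCell r (𝟙 j) (.cons (𝟙 j₁) r rest) rest :=
      .squareCons (𝟙 j₁) r r (𝟙 i₁) (by simp) (ZCell.id rest)
    exact ⟨zbot, .cons (𝟙 j) (𝟙 j) zr, hbot, hr.cons, .cons l r (𝟙 j) (𝟙 j) cup cdn chain⟩

theorem exists_cellChain_const_append {i a j : J} (p : Zig J i a) (s : Zig J a j) :
    ∃ zl : Zig J i i, zl.IsConst ∧ CellChain zl s p (p.append s) := by
  induction s with
  | nil a => exact ⟨.nil i, .nil i, by rw [Zig.append_nil]; exact .nil p⟩
  | @cons a j₁ a₁ j l r rest ih =>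
    let roof : Zig J a a₁ := .cons l r (.nil a₁)
    obtain ⟨zl, hzl, chain⟩ := ih (p.append roof)
    rw [Zig.append_assoc] at chain
    let mid : Zig J a j₁ := .cons l (𝟙 j₁) (.nil j₁)
    have cup : ZCell (𝟙 i) l (p.append mid) p := by
      simpa only [Zig.append_nil] using
        ZCell.whiskerLeft p (.squareCons l (𝟙 j₁) (𝟙 a) l (by simp) (.nil l) :
          ZCell (𝟙 a) l mid (.nil a))
    have cdn : ZCell (𝟙 i) r (p.append mid) (p.append roof) :=
      ZCell.whiskerLeft p
        (.roofCons l (𝟙 j₁) l r (𝟙 a) r (𝟙 j₁) (by simp) (by simp) (.nil r))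
    exact ⟨.cons (𝟙 i) (𝟙 i) zl, hzl.cons, .cons (𝟙 i) (𝟙 i) l r cup cdn chain⟩

/-- **Statement 17.** For every zig-zag `z : i ⇝ j` in `J` there is a transposition 2-cell
in the double category of iterated zig-zags: a finite vertical chain of 2-cells of `ℤJ`
with total horizontal source `z`, total horizontal target a constant zig-zag at `j`, left
vertical boundary the zig-zag `z` itself, and right vertical boundary a constant zig-zag at
`j`;  and dually a chain with horizontal source a constant zig-zag at `i`, horizontal
target `z`, left vertical boundary constant at `i` and right vertical boundary `z`. -/
theorem exists_transposition_cells {i j : J} (z : Zig J i j) :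
    (∃ (zbot : Zig J j j) (zr : Zig J j j),
      zbot.IsConst ∧ zr.IsConst ∧ CellChain z zr z zbot) ∧
    (∃ (ztop : Zig J i i) (zl : Zig J i i),
      ztop.IsConst ∧ zl.IsConst ∧ CellChain zl z ztop z) := by
  obtain ⟨zl, hzl, chain⟩ := exists_cellChain_const_append (.nil i) z
  exact ⟨exists_cellChain_self_const z, .nil i, zl, .nil i, hzl, chain⟩

end ZigZagTranspose
end
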